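/- Let Ω ⊆ ℝⁿ be open. Every Borel set A ⊆ Ω is capacitable for the relative (p(·),ϑ)-capacity: cap_{p,ϑ}(A,Ω) = inf { cap_{p,ϑ}(U,Ω) : U open, A ⊆ U ⊆ Ω } = sup { cap_{p,ϑ}(K,Ω) : K ⊆ A compact }. -/

import Mathlib

open MeasureTheory Metric Set Filter ENNReal

noncomputable section

/-- The weighted variable exponent modular `ρ_{p,ϑ,A}(g) = ∫_A |g|^{p(x)} ϑ(x) dx`. -/
def rhoMod {n : ℕ} (p ϑ : EuclideanSpace ℝ (Fin n) → ℝ)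
    (A : Set (EuclideanSpace ℝ (Fin n))) (g : EuclideanSpace ℝ (Fin n) → ℝ) : ℝ≥0∞ :=
  ∫⁻ x in A, ENNReal.ofReal (|g x| ^ p x * ϑ x)

/-- Relative `(p(·),ϑ)`-capacity of a compact set `K` with respect to an open set `Ω`:
the infimum of `ρ_{p,ϑ,Ω}(‖Df‖)` over `C¹` functions with compact support contained in `Ω`
which are `≥ 1` on `K` (with `sInf ∅ = ∞`). -/
def relCapK {n : ℕ} (p ϑ : EuclideanSpace ℝ (Fin n) → ℝ)
    (K Ω : Set (EuclideanSpace ℝ (Fin n))) : ℝ≥0∞ :=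
  sInf ((fun f => rhoMod p ϑ Ω fun x => ‖fderiv ℝ f x‖) ''
    {f : EuclideanSpace ℝ (Fin n) → ℝ |
      ContDiff ℝ 1 f ∧ IsCompact (tsupport f) ∧ tsupport f ⊆ Ω ∧ ∀ x ∈ K, 1 ≤ f x})

/-- Relative capacity of an open subset `U ⊆ Ω`. -/
def relCapO {n : ℕ} (p ϑ : EuclideanSpace ℝ (Fin n) → ℝ)
    (U Ω : Set (EuclideanSpace ℝ (Fin n))) : ℝ≥0∞ :=
  ⨆ (K : Set (EuclideanSpace ℝ (Fin n))) (_ : IsCompact K ∧ K ⊆ U), relCapK p ϑ K Ω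

/-- Relative capacity of an arbitrary subset `A ⊆ Ω`. -/
def relCap {n : ℕ} (p ϑ : EuclideanSpace ℝ (Fin n) → ℝ)
    (A Ω : Set (EuclideanSpace ℝ (Fin n))) : ℝ≥0∞ :=
  ⨅ (U : Set (EuclideanSpace ℝ (Fin n))) (_ : IsOpen U ∧ A ⊆ U ∧ U ⊆ Ω), relCapO p ϑ U Ω

/-- The Sobolev `(p(·),ϑ)`-capacity of `A ⊆ ℝⁿ`. -/
def sobCap {n : ℕ} (p ϑ : EuclideanSpace ℝ (Fin n) → ℝ)
    (A : Set (EuclideanSpace ℝ (Fin n))) : ℝ≥0∞ :=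
  sInf ((fun f => ∫⁻ x, ENNReal.ofReal ((|f x| ^ p x + ‖fderiv ℝ f x‖ ^ p x) * ϑ x)) ''
    {f : EuclideanSpace ℝ (Fin n) → ℝ |
      ContDiff ℝ 1 f ∧ ∃ U, IsOpen U ∧ A ⊆ U ∧ ∀ x ∈ U, 1 ≤ f x})

/-- The weighted measure `μ_ϑ(A) = ∫_A ϑ(x) dx`. -/
def muW {n : ℕ} (ϑ : EuclideanSpace ℝ (Fin n) → ℝ)
    (A : Set (EuclideanSpace ℝ (Fin n))) : ℝ≥0∞ :=
  ∫⁻ x in A, ENNReal.ofReal (ϑ x)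

/-- `μ_ϑ` is doubling with constant `cd`. -/
def DoublingW {n : ℕ} (ϑ : EuclideanSpace ℝ (Fin n) → ℝ) (cd : ℝ) : Prop :=
  1 ≤ cd ∧ ∀ (x : EuclideanSpace ℝ (Fin n)) (r : ℝ), 0 < r →
    muW ϑ (ball x (2 * r)) ≤ ENNReal.ofReal cd * muW ϑ (ball x r)

/-- Poincaré hypothesis with constant `c` for the weight `ϑ`. -/
def PoincareHyp {n : ℕ} (ϑ : EuclideanSpace ℝ (Fin n) → ℝ) (c : ℝ) : Prop :=
  ∀ Ω : Set (EuclideanSpace ℝ (Fin n)), IsOpen Ω → Bornology.IsBounded Ω →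
    ∀ f : EuclideanSpace ℝ (Fin n) → ℝ, ContDiff ℝ 1 f → IsCompact (tsupport f) →
      tsupport f ⊆ Ω →
      ∫ x in Ω, |f x| * ϑ x ≤ c * diam Ω * ∫ x in Ω, ‖fderiv ℝ f x‖ * ϑ x

/-- Embedding hypothesis `L^{p(·)}_ϑ(Ω) ↪ L¹_ϑ(Ω)` with constants `c₁ Ω`. -/
def EmbeddingHyp {n : ℕ} (p ϑ : EuclideanSpace ℝ (Fin n) → ℝ)
    (c₁ : Set (EuclideanSpace ℝ (Fin n)) → ℝ) : Prop :=
  ∀ Ω : Set (EuclideanSpace ℝ (Fin n)), IsOpen Ω → Bornology.IsBounded Ω →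
    0 < c₁ Ω ∧ ∀ g : EuclideanSpace ℝ (Fin n) → ℝ, Measurable g → 1 ≤ rhoMod p ϑ Ω g →
      (∫⁻ x in Ω, ENNReal.ofReal (|g x| * ϑ x)) ≤ ENNReal.ofReal (c₁ Ω) * rhoMod p ϑ Ω g

/-- The Wiener sum `W^{sum}_{p,ϑ}(A,x₀)`. -/
def wienerSum {n : ℕ} (p ϑ : EuclideanSpace ℝ (Fin n) → ℝ)
    (A : Set (EuclideanSpace ℝ (Fin n))) (x₀ : EuclideanSpace ℝ (Fin n)) : ℝ≥0∞ :=
  ∑' i : ℕ,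
    (relCap p ϑ (A ∩ ball x₀ ((2 : ℝ) ^ (-(i : ℤ)))) (ball x₀ ((2 : ℝ) ^ (1 - (i : ℤ)))) /
        relCap p ϑ (ball x₀ ((2 : ℝ) ^ (-(i : ℤ)))) (ball x₀ ((2 : ℝ) ^ (1 - (i : ℤ))))) ^
      (1 / (p x₀ - 1))

/-- The Wiener type integral `W_{p,ϑ}(A,x₀)`. -/
def wienerInt {n : ℕ} (p ϑ : EuclideanSpace ℝ (Fin n) → ℝ)
    (A : Set (EuclideanSpace ℝ (Fin n))) (x₀ : EuclideanSpace ℝ (Fin n)) : ℝ≥0∞ :=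
  ∫⁻ r in Set.Ioo (0 : ℝ) 1,
    (relCap p ϑ (A ∩ ball x₀ r) (ball x₀ (2 * r)) /
        relCap p ϑ (ball x₀ r) (ball x₀ (2 * r))) ^ (1 / (p x₀ - 1)) / ENNReal.ofReal r

/-!
The relative capacity is a Choquet capacity: it is monotone, outer by construction, and
continuous along increasing sequences. Continuity rests on strong subadditivity,
`cap (K₁ ∪ K₂) + cap (K₁ ∩ K₂) ≤ cap K₁ + cap K₂`, obtained by testing with smoothed versions of
`max f₁ f₂` and `min f₁ f₂`: at every point their gradients are complementary convex combinations
of `Df₁` and `Df₂`, so convexity of `t ↦ t ^ p(x)` bounds their modulars by those of `f₁` and `f₂`.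
Choquet's capacitability theorem then covers Borel sets, which are analytic: writing `A` as a
continuous image of `ℕ → ℕ`, bound the coordinates one at a time while keeping the capacity of the
image above a given `t`; the compact image of the resulting box still has capacity at least `t`,
because the capacity is outer and every neighbourhood of that compact set contains the image of one
of the finite-stage sets.
-/

section Choquet

attribute [local instance] PiNat.metricSpaceNatNat in
theorem exists_forall_lt_le_subset_of_isOpen {s : ℕ → ℕ} {W : Set (ℕ → ℕ)} (hW : IsOpen W)
    (hsW : {x | ∀ i, x i ≤ s i} ⊆ W) : ∃ k, {x | ∀ i < k, x i ≤ s i} ⊆ W := by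
  have hcompact : IsCompact {x : ℕ → ℕ | ∀ i, x i ≤ s i} := by
    simpa [Set.pi] using isCompact_univ_pi fun i => (finite_Iic (s i)).isCompact
  obtain ⟨δ, hδ, hδW⟩ := hcompact.exists_thickening_subset_open hW hsW
  obtain ⟨k, hk⟩ := exists_pow_lt_of_lt_one hδ one_half_lt_one
  -- clamping `x` at `s` lands in the box and changes no coordinate below `k`
  refine ⟨k, fun x hx => hδW (mem_thickening_iff.2 ⟨fun i => min (x i) (s i),
    fun i => min_le_right _ _, (PiNat.mem_cylinder_iff_dist_le.1 ?_).trans_lt hk⟩)⟩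
  exact PiNat.mem_cylinder_iff.2 fun i hi => (min_eq_left (hx i hi)).symm

variable {X : Type*} [TopologicalSpace X] {c : Set X → ℝ≥0∞}

theorem MeasureTheory.AnalyticSet.exists_isCompact_le_capacity (mono : Monotone c)
    (iUnion_le : ∀ B : ℕ → Set X, Monotone B → c (⋃ k, B k) ≤ ⨆ k, c (B k))
    (outer : ∀ K, IsCompact K → ⨅ (U : Set X) (_ : IsOpen U ∧ K ⊆ U), c U ≤ c K)
    {A : Set X} (hA : AnalyticSet A) {t : ℝ≥0∞} (ht : t < c A) :
    ∃ K, IsCompact K ∧ K ⊆ A ∧ t ≤ c K := by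
  rw [AnalyticSet] at hA
  obtain rfl | ⟨f, hf, rfl⟩ := hA
  · exact ⟨∅, isCompact_empty, subset_rfl, ht.le⟩
  have refine_coord : ∀ (C : Set (ℕ → ℕ)) (k : ℕ),
      ∃ m, t < c (f '' C) → t < c (f '' (C ∩ {x | x k ≤ m})) := by
    intro C k
    by_contra! h
    choose hC hm using h
    have hunion : ⋃ m, f '' (C ∩ {x | x k ≤ m}) = f '' C := by
      simp only [← image_iUnion, ← inter_iUnion]
      congr
      exact inter_eq_left.2 fun x _ => mem_iUnion.2 ⟨x k, mem_ofPred.2 le_rfl⟩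
    have hmono : Monotone fun m => f '' (C ∩ {x | x k ≤ m}) := fun a b hab =>
      image_mono (inter_subset_inter_right _ fun x hx => le_trans hx hab)
    exact (hC 0).not_ge (hunion ▸ (iUnion_le _ hmono).trans (iSup_le hm))
  choose m hm using refine_coord
  -- `C k` restricts the first `k` coordinates, keeping the capacity of its image above `t`.
  let C : ℕ → Set (ℕ → ℕ) := fun k =>
    Nat.rec (motive := fun _ => Set (ℕ → ℕ)) univ (fun k Ck => Ck ∩ {x | x k ≤ m Ck k}) k
  let s : ℕ → ℕ := fun k => m (C k) k
  have hC : ∀ k, t < c (f '' C k) := by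
    intro k
    induction k with
    | zero => simpa [C] using ht
    | succ k ih => exact hm _ _ ih
  have hCs : ∀ k, C k ⊆ {x | ∀ i < k, x i ≤ s i} := by
    intro k
    induction k with
    | zero => simp
    | succ k ih =>
      rintro x ⟨hx, hxk⟩ i hi
      rcases Nat.lt_succ_iff_lt_or_eq.1 hi with hi | rfl
      exacts [ih hx i hi, hxk]
  have hK : IsCompact (f '' {x | ∀ i, x i ≤ s i}) := by
    refine IsCompact.image ?_ hf
    simpa [Set.pi] using isCompact_univ_pi fun i => (finite_Iic (s i)).isCompact
  refine ⟨_, hK, image_subset_range _ _, le_trans ?_ (outer _ hK)⟩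
  refine le_iInf₂ fun U ⟨hU, hKU⟩ => ?_
  obtain ⟨k, hk⟩ := exists_forall_lt_le_subset_of_isOpen (hU.preimage hf) (image_subset_iff.1 hKU)
  exact (hC k).le.trans (mono ((image_mono (hCs k)).trans (image_subset_iff.2 hk)))

theorem MeasureTheory.AnalyticSet.capacity_eq_iSup_isCompact (mono : Monotone c)
    (iUnion_le : ∀ B : ℕ → Set X, Monotone B → c (⋃ k, B k) ≤ ⨆ k, c (B k))
    (outer : ∀ K, IsCompact K → ⨅ (U : Set X) (_ : IsOpen U ∧ K ⊆ U), c U ≤ c K)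
    {A : Set X} (hA : AnalyticSet A) :
    c A = ⨆ (K : Set X) (_ : IsCompact K ∧ K ⊆ A), c K := by
  refine le_antisymm (le_of_forall_lt_imp_le_of_dense fun t ht => ?_)
    (iSup₂_le fun K hK => mono hK.2)
  obtain ⟨K, hK, hKA, htK⟩ := hA.exists_isCompact_le_capacity mono iUnion_le outer ht
  exact htK.trans (le_iSup₂ (f := fun K (_ : IsCompact K ∧ K ⊆ A) => c K) K ⟨hK, hKA⟩)

end Choquet

section SmoothMax

theorem norm_smul_add_smul_rpow_add_le {F : Type*} [SeminormedAddCommGroup F] [NormedSpace ℝ F]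
    (x y : F) {w r : ℝ} (hw : w ∈ Icc (0 : ℝ) 1) (hr : 1 ≤ r) :
    ‖w • x + (1 - w) • y‖ ^ r + ‖(1 - w) • x + w • y‖ ^ r ≤ ‖x‖ ^ r + ‖y‖ ^ r := by
  obtain ⟨hw₀, hw₁⟩ := hw
  have hw₁' : 0 ≤ 1 - w := sub_nonneg.2 hw₁
  have bound : ∀ a b : ℝ, 0 ≤ a → 0 ≤ b → a + b = 1 →
      ‖a • x + b • y‖ ^ r ≤ a * ‖x‖ ^ r + b * ‖y‖ ^ r := fun a b ha hb hab =>
    calc ‖a • x + b • y‖ ^ r ≤ (a * ‖x‖ + b * ‖y‖) ^ r := by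
          gcongr
          refine (norm_add_le _ _).trans_eq ?_
          rw [norm_smul, norm_smul, Real.norm_of_nonneg ha, Real.norm_of_nonneg hb]
      _ ≤ a * ‖x‖ ^ r + b * ‖y‖ ^ r := by
          simpa [smul_eq_mul] using (convexOn_rpow hr).2 (norm_nonneg x) (norm_nonneg y) ha hb hab
  linarith [bound w (1 - w) hw₀ hw₁' (by ring), bound (1 - w) w hw₁' hw₀ (by ring)]

theorem tsupport_comp₂_subset {X M N P : Type*} [TopologicalSpace X] [Zero M] [Zero N] [Zero P]
    {F : M → N → P} (hF : F 0 0 = 0) (f₁ : X → M) (f₂ : X → N) :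
    tsupport (fun x => F (f₁ x) (f₂ x)) ⊆ tsupport f₁ ∪ tsupport f₂ :=
  (closure_mono (Function.support_binop_subset F hF f₁ f₂)).trans closure_union.subset

/-- `max a b = (a + b + |a - b|) / 2` with `|u|` replaced by the smooth `√(u ^ 2 + δ ^ 2) - δ`;
`a + b - smoothMax δ a b` is the matching smooth `min a b`. -/
def smoothMax (δ a b : ℝ) : ℝ := (a + b + √((a - b) ^ 2 + δ ^ 2) - δ) / 2

theorem smoothMax_zero_zero {δ : ℝ} (hδ : 0 ≤ δ) : smoothMax δ 0 0 = 0 := by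
  simp [smoothMax, Real.sqrt_sq hδ]

theorem max_sub_half_le_smoothMax (δ a b : ℝ) : max a b - δ / 2 ≤ smoothMax δ a b := by
  have : |a - b| ≤ √((a - b) ^ 2 + δ ^ 2) :=
    Real.abs_le_sqrt (le_add_of_nonneg_right (sq_nonneg δ))
  rw [smoothMax, max_def]
  split_ifs <;> cases abs_cases (a - b) <;> linarith

theorem smoothMax_le_max {δ : ℝ} (hδ : 0 ≤ δ) (a b : ℝ) : smoothMax δ a b ≤ max a b := by
  have : √((a - b) ^ 2 + δ ^ 2) ≤ |a - b| + δ := by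
    rw [Real.sqrt_le_left (by positivity)]
    nlinarith [sq_abs (a - b), abs_nonneg (a - b)]
  rw [smoothMax, max_def]
  split_ifs <;> cases abs_cases (a - b) <;> linarith

variable {E : Type*} [NormedAddCommGroup E] [NormedSpace ℝ E] {f₁ f₂ : E → ℝ} {δ : ℝ}

theorem ContDiff.smoothMax {n : WithTop ℕ∞} (hδ : δ ≠ 0) (h₁ : ContDiff ℝ n f₁)
    (h₂ : ContDiff ℝ n f₂) : ContDiff ℝ n fun x => smoothMax δ (f₁ x) (f₂ x) := by
  unfold _root_.smoothMax
  have hsq : ContDiff ℝ n fun x => √((f₁ x - f₂ x) ^ 2 + δ ^ 2) :=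
    (((h₁.sub h₂).pow 2).add contDiff_const).sqrt fun x => by positivity
  exact (((h₁.add h₂).add hsq).sub contDiff_const).div_const 2

theorem HasFDerivAt.exists_smoothMax {D₁ D₂ : E →L[ℝ] ℝ} {x : E} (hδ : δ ≠ 0)
    (h₁ : HasFDerivAt f₁ D₁ x) (h₂ : HasFDerivAt f₂ D₂ x) :
    ∃ w ∈ Icc (0 : ℝ) 1,
      HasFDerivAt (fun y => smoothMax δ (f₁ y) (f₂ y)) (w • D₁ + (1 - w) • D₂) x := by
  set q := √((f₁ x - f₂ x) ^ 2 + δ ^ 2)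
  have hq : 0 < q := Real.sqrt_pos.2 (by positivity)
  have hdiff : |f₁ x - f₂ x| ≤ q := Real.abs_le_sqrt (le_add_of_nonneg_right (sq_nonneg δ))
  have hsq := (((h₁.sub h₂).pow 2).add_const (δ ^ 2)).sqrt (by positivity)
  have hratio : |(f₁ x - f₂ x) / q| ≤ 1 := by
    rw [abs_div, _root_.abs_of_pos hq]
    exact div_le_one_of_le₀ hdiff hq.le
  refine ⟨(1 + (f₁ x - f₂ x) / q) / 2, ⟨?_, ?_⟩, ?_⟩
  · linarith [(abs_le.1 hratio).1]
  · linarith [(abs_le.1 hratio).2]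
  have h := (((h₁.add h₂).add hsq).sub_const δ).mul_const (1 / 2 : ℝ)
  refine (h.congr_fderiv ?_).congr_of_eventuallyEq (.of_forall fun y => ?_)
  · ext v
    simp only [Pi.sub_apply, nsmul_eq_mul, add_apply, smul_apply, smul_eq_mul, sub_apply]
    field_simp
    ring
  · simp only [_root_.smoothMax, Pi.add_apply, Pi.sub_apply]
    ring

theorem norm_fderiv_smoothMax_rpow_add_le (hδ : δ ≠ 0) (h₁ : Differentiable ℝ f₁)
    (h₂ : Differentiable ℝ f₂) {r : ℝ} (hr : 1 ≤ r) (x : E) :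
    ‖fderiv ℝ (fun y => smoothMax δ (f₁ y) (f₂ y)) x‖ ^ r +
        ‖fderiv ℝ (fun y => f₁ y + f₂ y - smoothMax δ (f₁ y) (f₂ y)) x‖ ^ r ≤
      ‖fderiv ℝ f₁ x‖ ^ r + ‖fderiv ℝ f₂ x‖ ^ r := by
  obtain ⟨w, hw, hM⟩ := (h₁ x).hasFDerivAt.exists_smoothMax hδ (h₂ x).hasFDerivAt
  have hm : HasFDerivAt (fun y => f₁ y + f₂ y - smoothMax δ (f₁ y) (f₂ y)) _ x :=
    ((h₁ x).hasFDerivAt.add (h₂ x).hasFDerivAt).sub hM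
  have hcomb : fderiv ℝ f₁ x + fderiv ℝ f₂ x - (w • fderiv ℝ f₁ x + (1 - w) • fderiv ℝ f₂ x) =
      (1 - w) • fderiv ℝ f₁ x + w • fderiv ℝ f₂ x := by
    module
  rw [hM.fderiv, hm.fderiv, hcomb]
  exact norm_smul_add_smul_rpow_add_le _ _ hw hr

end SmoothMax

namespace ENNReal

theorem le_of_forall_one_lt_le_ofReal_rpow_mul {a b : ℝ≥0∞} {P : ℝ}
    (h : ∀ s : ℝ, 1 < s → a ≤ ENNReal.ofReal (s ^ P) * b) : a ≤ b := by
  have hlim : Tendsto (fun s : ℝ => ENNReal.ofReal (s ^ P)) (nhds 1) (nhds 1) := by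
    simpa [Function.comp_def] using (ENNReal.continuous_ofReal.tendsto _).comp
      (Real.continuousAt_rpow_const 1 P (Or.inl one_ne_zero)).tendsto
  have hlim' := (ENNReal.Tendsto.mul_const hlim (Or.inl one_ne_zero) (b := b)).mono_left
    (nhdsWithin_le_nhds (s := Ioi 1))
  rw [one_mul] at hlim'
  exact ge_of_tendsto hlim' (eventually_nhdsWithin_of_forall h)

end ENNReal

section Modular

variable {n : ℕ} {p ϑ : EuclideanSpace ℝ (Fin n) → ℝ} {Ω : Set (EuclideanSpace ℝ (Fin n))}

theorem rhoMod_add_rhoMod_le (hp : Measurable p) (hϑ : AEMeasurable ϑ) (hϑ₀ : ∀ x, 0 ≤ ϑ x)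
    {g₁ g₂ h₁ h₂ : EuclideanSpace ℝ (Fin n) → ℝ} (hg₁ : Measurable g₁) (hh₁ : Measurable h₁)
    (h : ∀ᵐ x ∂volume.restrict Ω, |g₁ x| ^ p x + |g₂ x| ^ p x ≤ |h₁ x| ^ p x + |h₂ x| ^ p x) :
    rhoMod p ϑ Ω g₁ + rhoMod p ϑ Ω g₂ ≤ rhoMod p ϑ Ω h₁ + rhoMod p ϑ Ω h₂ := by
  have hmeas : ∀ g : EuclideanSpace ℝ (Fin n) → ℝ, Measurable g →
      AEMeasurable (fun x => ENNReal.ofReal (|g x| ^ p x * ϑ x)) (volume.restrict Ω) :=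
    fun g hg => (ENNReal.measurable_ofReal.comp_aemeasurable
      ((hg.abs.pow hp).aemeasurable.mul hϑ)).restrict
  simp only [rhoMod]
  rw [← lintegral_add_left' (hmeas g₁ hg₁), ← lintegral_add_left' (hmeas h₁ hh₁)]
  refine lintegral_mono_ae (h.mono fun x hx => ?_)
  have hnn : ∀ g : EuclideanSpace ℝ (Fin n) → ℝ, 0 ≤ |g x| ^ p x * ϑ x :=
    fun g => mul_nonneg (by positivity) (hϑ₀ x)
  rw [← ENNReal.ofReal_add (hnn g₁) (hnn g₂), ← ENNReal.ofReal_add (hnn h₁) (hnn h₂),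
    ← add_mul, ← add_mul]
  exact ENNReal.ofReal_le_ofReal (mul_le_mul_of_nonneg_right hx (hϑ₀ x))

theorem rhoMod_fderiv_smoothMax_add_le (hp : Measurable p) (hp₁ : ∀ᵐ x, 1 ≤ p x)
    (hϑ : AEMeasurable ϑ) (hϑ₀ : ∀ x, 0 ≤ ϑ x) {f₁ f₂ : EuclideanSpace ℝ (Fin n) → ℝ} {δ : ℝ}
    (hδ : δ ≠ 0) (hf₁ : ContDiff ℝ 1 f₁) (hf₂ : ContDiff ℝ 1 f₂) :
    rhoMod p ϑ Ω (fun x => ‖fderiv ℝ (fun y => smoothMax δ (f₁ y) (f₂ y)) x‖) +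
        rhoMod p ϑ Ω (fun x => ‖fderiv ℝ (fun y => f₁ y + f₂ y - smoothMax δ (f₁ y) (f₂ y)) x‖) ≤
      rhoMod p ϑ Ω (fun x => ‖fderiv ℝ f₁ x‖) + rhoMod p ϑ Ω (fun x => ‖fderiv ℝ f₂ x‖) := by
  refine rhoMod_add_rhoMod_le hp hϑ hϑ₀
    ((hf₁.smoothMax hδ hf₂).continuous_fderiv one_ne_zero).norm.measurable
    (hf₁.continuous_fderiv one_ne_zero).norm.measurable
    (ae_restrict_of_ae (hp₁.mono fun x hx => ?_))
  simpa only [abs_norm] using norm_fderiv_smoothMax_rpow_add_le hδ (hf₁.differentiable one_ne_zero)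
    (hf₂.differentiable one_ne_zero) hx x

theorem rhoMod_fderiv_const_mul_le {P s : ℝ} (hpP : ∀ᵐ x, p x ≤ P) (hs : 1 ≤ s)
    {f : EuclideanSpace ℝ (Fin n) → ℝ} (hf : Differentiable ℝ f) :
    rhoMod p ϑ Ω (fun x => ‖fderiv ℝ (fun y => s * f y) x‖) ≤
      ENNReal.ofReal (s ^ P) * rhoMod p ϑ Ω (fun x => ‖fderiv ℝ f x‖) := by
  have hs₀ : 0 ≤ s := zero_le_one.trans hs
  rw [rhoMod, rhoMod, ← lintegral_const_mul' _ _ ENNReal.ofReal_ne_top]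
  refine lintegral_mono_ae (ae_restrict_of_ae (hpP.mono fun x hx => ?_))
  rw [fderiv_const_mul (hf x), norm_smul, Real.norm_of_nonneg hs₀, abs_norm, abs_mul, abs_norm,
    abs_of_nonneg hs₀, Real.mul_rpow hs₀ (norm_nonneg _), mul_assoc,
    ENNReal.ofReal_mul (Real.rpow_nonneg hs₀ _)]
  gcongr

end Modular

section Capacity

variable {n : ℕ} {p ϑ : EuclideanSpace ℝ (Fin n) → ℝ}
  {Ω K K' K₁ K₂ U V A B : Set (EuclideanSpace ℝ (Fin n))} {f f₁ f₂ : EuclideanSpace ℝ (Fin n) → ℝ}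

def CapAdmissible (K Ω : Set (EuclideanSpace ℝ (Fin n))) (f : EuclideanSpace ℝ (Fin n) → ℝ) :
    Prop :=
  ContDiff ℝ 1 f ∧ HasCompactSupport f ∧ tsupport f ⊆ Ω ∧ ∀ x ∈ K, 1 ≤ f x

theorem relCapK_eq_iInf :
    relCapK p ϑ K Ω = ⨅ (f) (_ : CapAdmissible K Ω f), rhoMod p ϑ Ω fun x => ‖fderiv ℝ f x‖ :=
  sInf_image

theorem relCapK_le_rhoMod (hf : CapAdmissible K Ω f) :
    relCapK p ϑ K Ω ≤ rhoMod p ϑ Ω fun x => ‖fderiv ℝ f x‖ :=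
  sInf_le ⟨f, hf, rfl⟩

theorem relCapK_mono (h : K ⊆ K') : relCapK p ϑ K Ω ≤ relCapK p ϑ K' Ω := by
  simp only [relCapK_eq_iInf]
  exact le_iInf₂ fun f hf => iInf₂_le f ⟨hf.1, hf.2.1, hf.2.2.1, fun x hx => hf.2.2.2 x (h hx)⟩

theorem CapAdmissible.comp₂ {F : ℝ → ℝ → ℝ} (hF : F 0 0 = 0) (h₁ : CapAdmissible K₁ Ω f₁)
    (h₂ : CapAdmissible K₂ Ω f₂) (hc : ContDiff ℝ 1 fun x => F (f₁ x) (f₂ x))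
    (hK : ∀ x ∈ K, 1 ≤ F (f₁ x) (f₂ x)) : CapAdmissible K Ω fun x => F (f₁ x) (f₂ x) :=
  ⟨hc, h₁.2.1.comp₂_left h₂.2.1 hF,
    (tsupport_comp₂_subset hF f₁ f₂).trans (union_subset h₁.2.2.1 h₂.2.2.1), hK⟩

theorem CapAdmissible.const_mul_smoothMax {s : ℝ} (h₁ : CapAdmissible K₁ Ω f₁)
    (h₂ : CapAdmissible K₂ Ω f₂) (hs : 1 < s) :
    CapAdmissible (K₁ ∪ K₂) Ω fun x => s * smoothMax (2 * (1 - s⁻¹)) (f₁ x) (f₂ x) := by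
  have hδ : 0 < 2 * (1 - s⁻¹) := by linarith [inv_lt_one_of_one_lt₀ hs]
  refine h₁.comp₂ (F := fun a b => s * smoothMax (2 * (1 - s⁻¹)) a b)
    (by simp [smoothMax_zero_zero hδ.le]) h₂ (contDiff_const.mul (h₁.1.smoothMax hδ.ne' h₂.1))
    fun x hx => ?_
  have hmax : 1 ≤ max (f₁ x) (f₂ x) := hx.elim (fun hx => le_max_of_le_left (h₁.2.2.2 x hx))
    fun hx => le_max_of_le_right (h₂.2.2.2 x hx)
  have hsmooth := max_sub_half_le_smoothMax (2 * (1 - s⁻¹)) (f₁ x) (f₂ x)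
  have hs₀ : 0 < s := one_pos.trans hs
  calc (1 : ℝ) = s * s⁻¹ := (mul_inv_cancel₀ hs₀.ne').symm
    _ ≤ s * smoothMax (2 * (1 - s⁻¹)) (f₁ x) (f₂ x) := by gcongr; linarith

theorem CapAdmissible.add_sub_smoothMax {δ : ℝ} (h₁ : CapAdmissible K₁ Ω f₁)
    (h₂ : CapAdmissible K₂ Ω f₂) (hδ : 0 < δ) :
    CapAdmissible (K₁ ∩ K₂) Ω fun x => f₁ x + f₂ x - smoothMax δ (f₁ x) (f₂ x) := by
  refine h₁.comp₂ (F := fun a b => a + b - smoothMax δ a b)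
    (by simp [smoothMax_zero_zero hδ.le]) h₂ ((h₁.1.add h₂.1).sub (h₁.1.smoothMax hδ.ne' h₂.1))
    fun x hx => ?_
  have := smoothMax_le_max hδ.le (f₁ x) (f₂ x)
  have := min_add_max (f₁ x) (f₂ x)
  have := le_min (h₁.2.2.2 x hx.1) (h₂.2.2.2 x hx.2)
  linarith

theorem relCapK_union_add_relCapK_inter_le (hp : Measurable p) (hp₁ : ∀ᵐ x, 1 ≤ p x)
    (hpb : IsBoundedUnder (· ≤ ·) (ae volume) p) (hϑ : AEMeasurable ϑ) (hϑ₀ : ∀ x, 0 ≤ ϑ x) :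
    relCapK p ϑ (K₁ ∪ K₂) Ω + relCapK p ϑ (K₁ ∩ K₂) Ω ≤
      relCapK p ϑ K₁ Ω + relCapK p ϑ K₂ Ω := by
  obtain ⟨P, hP⟩ := hpb
  have hpP : ∀ᵐ x, p x ≤ max P 0 :=
    (eventually_map.1 hP).mono fun x hx => hx.trans (le_max_left _ _)
  rw [relCapK_eq_iInf (K := K₁), relCapK_eq_iInf (K := K₂)]
  refine le_iInf₂_add_iInf₂ fun f₁ h₁ f₂ h₂ =>
    ENNReal.le_of_forall_one_lt_le_ofReal_rpow_mul (P := max P 0) fun s hs => ?_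
  -- chosen so that `max f₁ f₂ - δ / 2 ≥ s⁻¹` on `K₁ ∪ K₂`
  set δ := 2 * (1 - s⁻¹)
  have hδ : 0 < δ := by linarith [inv_lt_one_of_one_lt₀ hs]
  have hsP : 1 ≤ ENNReal.ofReal (s ^ max P 0) :=
    ENNReal.one_le_ofReal.2 (Real.one_le_rpow hs.le (le_max_right _ _))
  calc relCapK p ϑ (K₁ ∪ K₂) Ω + relCapK p ϑ (K₁ ∩ K₂) Ω
      ≤ ENNReal.ofReal (s ^ max P 0) *
            rhoMod p ϑ Ω (fun x => ‖fderiv ℝ (fun y => smoothMax δ (f₁ y) (f₂ y)) x‖) +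
          rhoMod p ϑ Ω
            (fun x => ‖fderiv ℝ (fun y => f₁ y + f₂ y - smoothMax δ (f₁ y) (f₂ y)) x‖) :=
        add_le_add ((relCapK_le_rhoMod (h₁.const_mul_smoothMax h₂ hs)).trans
          (rhoMod_fderiv_const_mul_le hpP hs.le
            ((h₁.1.smoothMax hδ.ne' h₂.1).differentiable one_ne_zero)))
          (relCapK_le_rhoMod (h₁.add_sub_smoothMax h₂ hδ))
    _ ≤ ENNReal.ofReal (s ^ max P 0) *
          (rhoMod p ϑ Ω (fun x => ‖fderiv ℝ (fun y => smoothMax δ (f₁ y) (f₂ y)) x‖) +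
            rhoMod p ϑ Ω
              (fun x => ‖fderiv ℝ (fun y => f₁ y + f₂ y - smoothMax δ (f₁ y) (f₂ y)) x‖)) := by
        rw [mul_add]
        gcongr
        exact le_mul_of_one_le_left' hsP
    _ ≤ ENNReal.ofReal (s ^ max P 0) *
          (rhoMod p ϑ Ω (fun x => ‖fderiv ℝ f₁ x‖) + rhoMod p ϑ Ω (fun x => ‖fderiv ℝ f₂ x‖)) := by
        exact mul_le_mul_right (rhoMod_fderiv_smoothMax_add_le hp hp₁ hϑ hϑ₀ hδ.ne' h₁.1 h₂.1) _

theorem relCapK_le_relCapO (hK : IsCompact K) (hKU : K ⊆ U) :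
    relCapK p ϑ K Ω ≤ relCapO p ϑ U Ω :=
  le_iSup₂ (f := fun K (_ : IsCompact K ∧ K ⊆ U) => relCapK p ϑ K Ω) K ⟨hK, hKU⟩

theorem relCap_le_relCapO (hU : IsOpen U) (hAU : A ⊆ U) (hUΩ : U ⊆ Ω) :
    relCap p ϑ A Ω ≤ relCapO p ϑ U Ω :=
  iInf₂_le U ⟨hU, hAU, hUΩ⟩

theorem exists_isOpen_relCapO_lt {r : ℝ≥0∞} (h : relCap p ϑ A Ω < r) :
    ∃ U, (IsOpen U ∧ A ⊆ U ∧ U ⊆ Ω) ∧ relCapO p ϑ U Ω < r := by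
  simpa only [relCap, iInf_lt_iff, exists_prop] using h

theorem relCap_mono (h : A ⊆ B) : relCap p ϑ A Ω ≤ relCap p ϑ B Ω :=
  le_iInf₂ fun _ hU => relCap_le_relCapO hU.1 (h.trans hU.2.1) hU.2.2

theorem iInf_isOpen_relCap_le (A : Set (EuclideanSpace ℝ (Fin n))) :
    ⨅ (U : Set (EuclideanSpace ℝ (Fin n))) (_ : IsOpen U ∧ A ⊆ U), relCap p ϑ U Ω ≤
      relCap p ϑ A Ω :=
  le_iInf₂ fun U hU => iInf₂_le_of_le U ⟨hU.1, hU.2.1⟩ (relCap_le_relCapO hU.1 subset_rfl hU.2.2)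

theorem relCapO_iUnion_le {V : ℕ → Set (EuclideanSpace ℝ (Fin n))} (hV : ∀ k, IsOpen (V k))
    (hmono : Monotone V) : relCapO p ϑ (⋃ k, V k) Ω ≤ ⨆ k, relCapO p ϑ (V k) Ω :=
  iSup₂_le fun K ⟨hK, hKV⟩ => by
    obtain ⟨k, hk⟩ := hK.elim_directed_cover V hV hKV hmono.directed_le
    exact (relCapK_le_relCapO hK hk).trans (le_iSup (fun k => relCapO p ϑ (V k) Ω) k)

theorem relCapO_union_add_relCapO_inter_le (hp : Measurable p) (hp₁ : ∀ᵐ x, 1 ≤ p x)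
    (hpb : IsBoundedUnder (· ≤ ·) (ae volume) p) (hϑ : AEMeasurable ϑ) (hϑ₀ : ∀ x, 0 ≤ ϑ x)
    (hU : IsOpen U) (hV : IsOpen V) :
    relCapO p ϑ (U ∪ V) Ω + relCapO p ϑ (U ∩ V) Ω ≤ relCapO p ϑ U Ω + relCapO p ϑ V Ω := by
  refine ENNReal.biSup_add_biSup_le' ⟨∅, isCompact_empty, empty_subset _⟩
    ⟨∅, isCompact_empty, empty_subset _⟩ fun K hK K' hK' => ?_
  obtain ⟨K₁, K₂, hK₁, hK₂, hK₁U, hK₂V, rfl⟩ := hK.1.binary_compact_cover hU hV hK.2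
  calc relCapK p ϑ (K₁ ∪ K₂) Ω + relCapK p ϑ K' Ω
      ≤ relCapK p ϑ ((K₁ ∪ K') ∪ (K₂ ∪ K')) Ω + relCapK p ϑ ((K₁ ∪ K') ∩ (K₂ ∪ K')) Ω :=
        add_le_add (relCapK_mono (union_subset_union subset_union_left subset_union_left))
          (relCapK_mono (subset_inter subset_union_right subset_union_right))
    _ ≤ relCapK p ϑ (K₁ ∪ K') Ω + relCapK p ϑ (K₂ ∪ K') Ω :=
        relCapK_union_add_relCapK_inter_le hp hp₁ hpb hϑ hϑ₀
    _ ≤ relCapO p ϑ U Ω + relCapO p ϑ V Ω :=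
        add_le_add
          (relCapK_le_relCapO (hK₁.union hK'.1) (union_subset hK₁U (hK'.2.trans inter_subset_left)))
          (relCapK_le_relCapO (hK₂.union hK'.1)
            (union_subset hK₂V (hK'.2.trans inter_subset_right)))

theorem relCapO_accumulate_le (hp : Measurable p) (hp₁ : ∀ᵐ x, 1 ≤ p x)
    (hpb : IsBoundedUnder (· ≤ ·) (ae volume) p) (hϑ : AEMeasurable ϑ) (hϑ₀ : ∀ x, 0 ≤ ϑ x)
    {B U : ℕ → Set (EuclideanSpace ℝ (Fin n))} {ε : ℕ → ℝ≥0∞} (hB : Monotone B)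
    (hU : ∀ k, IsOpen (U k) ∧ B k ⊆ U k ∧ U k ⊆ Ω)
    (hUB : ∀ k, relCapO p ϑ (U k) Ω ≤ relCap p ϑ (B k) Ω + ε k)
    (hB_ne_top : ∀ k, relCap p ϑ (B k) Ω ≠ ⊤) (k : ℕ) :
    relCapO p ϑ (accumulate U k) Ω ≤ relCap p ϑ (B k) Ω + ∑ i ∈ Finset.range (k + 1), ε i := by
  induction k with
  | zero => simpa [accumulate_zero_nat] using hUB 0
  | succ k ih =>
    have hopen : IsOpen (accumulate U k) := isOpen_biUnion fun i _ => (hU i).1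
    have hBk : relCap p ϑ (B k) Ω ≤ relCapO p ϑ (accumulate U k ∩ U (k + 1)) Ω :=
      relCap_le_relCapO (hopen.inter (hU _).1)
        (subset_inter ((hU k).2.1.trans subset_accumulate) ((hB k.le_succ).trans (hU _).2.1))
        (inter_subset_right.trans (hU _).2.2)
    rw [← ENNReal.add_le_add_iff_left (hB_ne_top k)]
    calc relCap p ϑ (B k) Ω + relCapO p ϑ (accumulate U (k + 1)) Ω
        ≤ relCapO p ϑ (accumulate U k ∪ U (k + 1)) Ω +
            relCapO p ϑ (accumulate U k ∩ U (k + 1)) Ω := by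
          rw [accumulate_succ, add_comm]
          gcongr
      _ ≤ relCapO p ϑ (accumulate U k) Ω + relCapO p ϑ (U (k + 1)) Ω :=
          relCapO_union_add_relCapO_inter_le hp hp₁ hpb hϑ hϑ₀ hopen (hU _).1
      _ ≤ (relCap p ϑ (B k) Ω + ∑ i ∈ Finset.range (k + 1), ε i) +
            (relCap p ϑ (B (k + 1)) Ω + ε (k + 1)) :=
          add_le_add ih (hUB _)
      _ = relCap p ϑ (B k) Ω +
            (relCap p ϑ (B (k + 1)) Ω + ∑ i ∈ Finset.range (k + 1 + 1), ε i) := by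
          rw [Finset.sum_range_succ _ (k + 1)]
          ring

theorem relCap_iUnion_le (hp : Measurable p) (hp₁ : ∀ᵐ x, 1 ≤ p x)
    (hpb : IsBoundedUnder (· ≤ ·) (ae volume) p) (hϑ : AEMeasurable ϑ) (hϑ₀ : ∀ x, 0 ≤ ϑ x)
    (B : ℕ → Set (EuclideanSpace ℝ (Fin n))) (hB : Monotone B) :
    relCap p ϑ (⋃ k, B k) Ω ≤ ⨆ k, relCap p ϑ (B k) Ω := by
  refine ENNReal.le_of_forall_pos_le_add fun ε hε hfin => ?_
  have hB_ne_top : ∀ k, relCap p ϑ (B k) Ω ≠ ⊤ := fun k =>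
    ((le_iSup (fun k => relCap p ϑ (B k) Ω) k).trans_lt hfin).ne
  obtain ⟨η, hη, hηε⟩ := ENNReal.exists_pos_sum_of_countable' (ENNReal.coe_ne_zero.2 hε.ne') ℕ
  choose U hU hUB using fun k =>
    exists_isOpen_relCapO_lt (ENNReal.lt_add_right (hB_ne_top k) (hη k).ne')
  have hopen : ∀ k, IsOpen (accumulate U k) := fun k => isOpen_biUnion fun i _ => (hU i).1
  calc relCap p ϑ (⋃ k, B k) Ω ≤ relCapO p ϑ (⋃ k, accumulate U k) Ω :=
        relCap_le_relCapO (isOpen_iUnion hopen)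
          (iUnion_mono fun k => (hU k).2.1.trans subset_accumulate)
          (iUnion_subset fun k => iUnion₂_subset fun i _ => (hU i).2.2)
    _ ≤ ⨆ k, relCapO p ϑ (accumulate U k) Ω := relCapO_iUnion_le hopen monotone_accumulate
    _ ≤ (⨆ k, relCap p ϑ (B k) Ω) + ε := iSup_le fun k =>
        (relCapO_accumulate_le hp hp₁ hpb hϑ hϑ₀ hB hU (fun k => (hUB k).le) hB_ne_top k).trans
          (add_le_add (le_iSup (fun k => relCap p ϑ (B k) Ω) k)
            ((ENNReal.sum_le_tsum _).trans hηε.le))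

end Capacity

theorem ae_lt_of_lt_essInf_of_nonneg {α : Type*} [MeasurableSpace α] {μ : Measure α}
    {f : α → ℝ} {b : ℝ} (hb : 0 ≤ b) (h : b < essInf f μ) : ∀ᵐ x ∂μ, b < f x := by
  by_cases hbdd : IsBoundedUnder (· ≥ ·) (ae μ) f
  · exact eventually_lt_of_lt_liminf h hbdd
  -- otherwise `essInf f μ` is the junk value `sSup ∅ = 0`
  have hempty : {a | ∀ᶠ x in ae μ, a ≤ f x} = ∅ :=
    eq_empty_of_forall_notMem fun a ha => hbdd ⟨a, eventually_map.2 ha⟩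
  rw [essInf, liminf_eq, hempty, Real.sSup_empty] at h
  exact absurd h hb.not_gt

theorem stmt7_general (n : ℕ) (p ϑ : EuclideanSpace ℝ (Fin n) → ℝ)
    (hp : Measurable p)
    (hpm : 1 < essInf p (volume : Measure (EuclideanSpace ℝ (Fin n))))
    (hpb : Filter.IsBoundedUnder (· ≤ ·) (ae (volume : Measure (EuclideanSpace ℝ (Fin n)))) p)
    (hϑpos : ∀ x, 0 < ϑ x)
    (hϑloc : LocallyIntegrable ϑ (volume : Measure (EuclideanSpace ℝ (Fin n))))
    (Ω A : Set (EuclideanSpace ℝ (Fin n))) (hA : MeasurableSet A) :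
    relCap p ϑ A Ω =
        (⨅ (U : Set (EuclideanSpace ℝ (Fin n))) (_ : IsOpen U ∧ A ⊆ U ∧ U ⊆ Ω), relCapO p ϑ U Ω) ∧
      relCap p ϑ A Ω =
        ⨆ (K : Set (EuclideanSpace ℝ (Fin n))) (_ : IsCompact K ∧ K ⊆ A), relCap p ϑ K Ω := by
  have hp₁ : ∀ᵐ x, 1 ≤ p x := (ae_lt_of_lt_essInf_of_nonneg zero_le_one hpm).mono fun _ => le_of_lt
  have hϑ : AEMeasurable ϑ := hϑloc.aestronglyMeasurable.aemeasurable
  have hϑ₀ : ∀ x, 0 ≤ ϑ x := fun x => (hϑpos x).le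
  exact ⟨rfl, hA.analyticSet.capacity_eq_iSup_isCompact (fun _ _ => relCap_mono)
    (relCap_iUnion_le hp hp₁ hpb hϑ hϑ₀) fun K _ => iInf_isOpen_relCap_le K⟩

/-- Every Borel subset of `Ω` is capacitable for the relative `(p(·),ϑ)`-capacity. -/
theorem stmt7 (n : ℕ) (hn : 1 ≤ n) (p ϑ : EuclideanSpace ℝ (Fin n) → ℝ)
    (hp : Measurable p)
    (hpm : 1 < essInf p (volume : Measure (EuclideanSpace ℝ (Fin n))))
    (hpb : Filter.IsBoundedUnder (· ≤ ·) (ae (volume : Measure (EuclideanSpace ℝ (Fin n)))) p)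
    (hϑpos : ∀ x, 0 < ϑ x)
    (hϑloc : LocallyIntegrable ϑ (volume : Measure (EuclideanSpace ℝ (Fin n))))
    (Ω A : Set (EuclideanSpace ℝ (Fin n))) (hΩ : IsOpen Ω) (hA : MeasurableSet A) (hAΩ : A ⊆ Ω) :
    relCap p ϑ A Ω =
        (⨅ (U : Set (EuclideanSpace ℝ (Fin n))) (_ : IsOpen U ∧ A ⊆ U ∧ U ⊆ Ω), relCapO p ϑ U Ω) ∧
      relCap p ϑ A Ω =
        ⨆ (K : Set (EuclideanSpace ℝ (Fin n))) (_ : IsCompact K ∧ K ⊆ A), relCap p ϑ K Ω :=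
  stmt7_general n p ϑ hp hpm hpb hϑpos hϑloc Ω A hA

end
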